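/- arXiv:2603.26808 — 7 statements merged into one kernel-verified Lean document; each statement's English description precedes it below -/
import Mathlib

section
/- Let ψ : ℂ → ℂ be entire with finite Segal–Bargmann norm, i.e. (1/π)∫_ℂ |ψ(z)|² e^{-|z|²} dA(z) < ∞. Then for every w ∈ ℂ, the pointwise evaluation bound |ψ(w)|² · e^{-|w|²} ≤ (1/π)∫_ℂ |ψ(z)|² e^{-|z|²} dA(z) holds. -/
open MeasureTheory Real Set ComplexConjugate
open scoped Complex

/-! For an entire `g`, the mean value property on every circle `|z| = r`, integrated against
`r e^{-r²} dr` in polar coordinates, gives `∫ e^{-|z|²} g(z) dA = π g(0)`, hence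
`π |g(0)| ≤ ∫ |g(z)| e^{-|z|²} dA`. Apply this to `g(z) = ψ(w + z)² e^{-2 w̄ z - |w|²}`:
completing the square, `|g(z)| e^{-|z|²} = |ψ(w + z)|² e^{-|w + z|²}`, so the right-hand side is
the translate by `w` of the Segal–Bargmann integral, while `|g(0)| = |ψ(w)|² e^{-|w|²}`. -/

theorem integrableOn_comp_polarCoord_symm {E : Type*} [NormedAddCommGroup E] [NormedSpace ℝ E]
    {f : ℝ × ℝ → E} (hf : Integrable f) :
    IntegrableOn (fun p : ℝ × ℝ => p.1 • f (polarCoord.symm p)) polarCoord.target := by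
  have hiff := integrableOn_image_iff_integrableOn_abs_det_fderiv_smul volume
    polarCoord.open_target.measurableSet
    (fun p _ => (hasFDerivAt_polarCoord_symm p).hasFDerivWithinAt) polarCoord.symm.injOn f
  have himage : polarCoord.symm '' polarCoord.target = polarCoord.source :=
    polarCoord.symm.image_source_eq_target
  refine (hiff.mp (himage ▸ hf.integrableOn)).congr_fun (fun p hp => ?_)
    polarCoord.open_target.measurableSet
  simp only [det_fderivPolarCoordSymm, abs_of_pos (mem_Ioi.mp hp.1)]

theorem Complex.integrableOn_comp_polarCoord_symm {E : Type*} [NormedAddCommGroup E]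
    [NormedSpace ℝ E] {f : ℂ → E} (hf : Integrable f) :
    IntegrableOn (fun p : ℝ × ℝ => p.1 • f (Complex.polarCoord.symm p)) polarCoord.target :=
  _root_.integrableOn_comp_polarCoord_symm <|
    (Complex.volume_preserving_equiv_real_prod.symm.integrable_comp_emb
      Complex.measurableEquivRealProd.symm.measurableEmbedding).mpr hf

theorem Complex.polarCoord_symm_eq_circleMap (r θ : ℝ) :
    Complex.polarCoord.symm (r, θ) = circleMap 0 r θ := by
  simp [Complex.polarCoord_symm_apply, circleMap, Complex.exp_mul_I]

theorem DiffContOnCl.integral_Ioo_circleMap {E : Type*} [NormedAddCommGroup E]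
    [NormedSpace ℂ E] [CompleteSpace E] {g : ℂ → E} {c : ℂ} {R : ℝ}
    (hg : DiffContOnCl ℂ g (Metric.ball c |R|)) :
    ∫ θ in Ioo (-π) π, g (circleMap c R θ) = (2 * π) • g c := by
  have hshift : ∫ θ in (0)..2 * π, g (circleMap c R (θ + -π)) =
      ∫ θ in (-π)..π, g (circleMap c R θ) := by
    rw [intervalIntegral.integral_comp_add_right (fun θ => g (circleMap c R θ))]
    ring_nf
  have havg := circleAverage_eq_integral_add (f := g) (c := c) (R := R) (-π)
  rw [hg.circleAverage, hshift, intervalIntegral.integral_of_le (by linarith [pi_pos]),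
    integral_Ioc_eq_integral_Ioo] at havg
  rw [havg, smul_smul, mul_inv_cancel₀ (by positivity), one_smul]

theorem Differentiable.integral_radial_smul {E : Type*} [NormedAddCommGroup E]
    [NormedSpace ℂ E] [CompleteSpace E] {g : ℂ → E} (hg : Differentiable ℂ g) (φ : ℝ → ℝ)
    (hint : Integrable fun z : ℂ => φ ‖z‖ • g z) :
    ∫ z : ℂ, φ ‖z‖ • g z = (2 * π * ∫ r in Ioi 0, r * φ r) • g 0 := by
  have hpolar := Complex.integrableOn_comp_polarCoord_symm hint
  rw [polarCoord_target, Measure.volume_eq_prod] at hpolar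
  rw [← Complex.integral_comp_polarCoord_symm, polarCoord_target, Measure.volume_eq_prod,
    setIntegral_prod _ hpolar, ← integral_const_mul, ← integral_smul_const]
  refine setIntegral_congr_fun measurableSet_Ioi fun r (hr : 0 < r) => ?_
  have hcircle := (hg.diffContOnCl (s := Metric.ball 0 |r|)).integral_Ioo_circleMap
  simp only [Complex.polarCoord_symm_eq_circleMap, norm_circleMap_zero, abs_of_pos hr, smul_smul]
  rw [integral_smul, hcircle, smul_smul]
  ring_nf

theorem integral_Ioi_mul_exp_neg_sq : ∫ r in Ioi (0 : ℝ), r * rexp (-r ^ 2) = 2⁻¹ := by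
  have h := integral_mul_cexp_neg_mul_sq (b := 1) (by simp)
  simp only [neg_mul, one_mul, mul_one] at h
  rw [← Complex.ofReal_inj, ← integral_complex_ofReal]
  push_cast
  exact h

theorem Differentiable.pi_mul_norm_le_integral_norm_mul_exp_neg_sq {E : Type*}
    [NormedAddCommGroup E] [NormedSpace ℂ E] [CompleteSpace E] {g : ℂ → E}
    (hg : Differentiable ℂ g) (hint : Integrable fun z : ℂ => ‖g z‖ * rexp (-‖z‖ ^ 2)) :
    π * ‖g 0‖ ≤ ∫ z : ℂ, ‖g z‖ * rexp (-‖z‖ ^ 2) := by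
  have hnorm (z : ℂ) : ‖rexp (-‖z‖ ^ 2) • g z‖ = ‖g z‖ * rexp (-‖z‖ ^ 2) := by
    rw [norm_smul, norm_of_nonneg (exp_pos _).le, mul_comm]
  have hint' : Integrable fun z : ℂ => rexp (-‖z‖ ^ 2) • g z :=
    hint.mono' ((show Continuous fun z : ℂ => rexp (-‖z‖ ^ 2) by fun_prop).smul
      hg.continuous).aestronglyMeasurable (ae_of_all _ fun z => (hnorm z).le)
  have hmean := hg.integral_radial_smul (fun r => rexp (-r ^ 2)) hint'
  rw [integral_Ioi_mul_exp_neg_sq, show 2 * π * 2⁻¹ = π by ring] at hmean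
  calc π * ‖g 0‖ = ‖∫ z : ℂ, rexp (-‖z‖ ^ 2) • g z‖ := by
        rw [hmean, norm_smul, norm_of_nonneg pi_pos.le]
    _ ≤ ∫ z : ℂ, ‖rexp (-‖z‖ ^ 2) • g z‖ := norm_integral_le_integral_norm _
    _ = ∫ z : ℂ, ‖g z‖ * rexp (-‖z‖ ^ 2) := by simp only [hnorm]

theorem exp_neg_norm_add_sq (w z : ℂ) :
    rexp (-‖w + z‖ ^ 2) = ‖cexp (-2 * conj w * z - ((‖w‖ ^ 2 : ℝ) : ℂ))‖ * rexp (-‖z‖ ^ 2) := by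
  rw [Complex.norm_exp, ← exp_add]
  congr 1
  simp only [Complex.sq_norm, Complex.normSq_apply, Complex.sub_re, Complex.mul_re,
    Complex.conj_re, Complex.conj_im, Complex.ofReal_re, Complex.add_re, Complex.add_im]
  norm_num
  ring

/-- If `ψ : ℂ → ℂ` is entire with finite Segal–Bargmann norm, then for every
`w ∈ ℂ` the pointwise evaluation bound
`|ψ(w)|² e^{-|w|²} ≤ (1/π) ∫_ℂ |ψ(z)|² e^{-|z|²} dA(z)` holds. -/
theorem segal_bargmann_pointwise_bound (ψ : ℂ → ℂ)
    (hψ : Differentiable ℂ ψ)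
    (hint : Integrable (fun z : ℂ => ‖ψ z‖ ^ 2 * Real.exp (-(‖z‖) ^ 2))) :
    ∀ w : ℂ,
      ‖ψ w‖ ^ 2 * Real.exp (-(‖w‖) ^ 2) ≤
        (1 / π) * ∫ z : ℂ, ‖ψ z‖ ^ 2 * Real.exp (-(‖z‖) ^ 2) := by
  intro w
  set g : ℂ → ℂ := fun z => ψ (w + z) ^ 2 * cexp (-2 * conj w * z - ((‖w‖ ^ 2 : ℝ) : ℂ))
  have hg : Differentiable ℂ g := by fun_prop
  have hg_weight (z : ℂ) :
      ‖g z‖ * rexp (-‖z‖ ^ 2) = ‖ψ (w + z)‖ ^ 2 * rexp (-‖w + z‖ ^ 2) := by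
    rw [exp_neg_norm_add_sq w z, norm_mul, norm_pow, mul_assoc]
  have hg_zero : ‖g 0‖ = ‖ψ w‖ ^ 2 * rexp (-‖w‖ ^ 2) := by
    simpa using hg_weight 0
  have hbound := hg.pi_mul_norm_le_integral_norm_mul_exp_neg_sq
    (by simpa only [hg_weight] using hint.comp_add_left w)
  rw [integral_congr_ae (ae_of_all _ hg_weight), hg_zero,
    integral_add_left_eq_self (fun z => ‖ψ z‖ ^ 2 * rexp (-‖z‖ ^ 2)) w] at hbound
  rw [one_div_mul_eq_div, le_div_iff₀ pi_pos, mul_comm]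
  exact hbound
end

section
/- Let ψ : ℂ → ℂ be entire with finite Segal–Bargmann norm. Then for every natural number n, the inner product of the monomial z^n against ψ extracts the n-th Taylor coefficient at the origin: (1/π)∫_ℂ conj(z)^n ψ(z) e^{-|z|²} dA(z) = (d/dz)^n ψ evaluated at 0 (the n-th iterated derivative of ψ at 0), which equals n! times the n-th Taylor coefficient of ψ. -/
/-
In polar coordinates the integral is `∫₀^∞ 2π r e^{-r²} A(r) dr`, where `A(r)` is the average of
`conj(z)^n ψ(z)` over the circle `|z| = r`. On that circle `conj z = r² / z`, so `A(r)` is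
`r^{2n}` times a Cauchy integral, namely `r^{2n} ψ⁽ⁿ⁾(0) / n!`; the remaining radial integral
`∫₀^∞ 2 r^{2n+1} e^{-r²} dr = n!` cancels the factorial. Integrability of the pairing comes from
`|z|ⁿ |ψ(z)| ≤ (|z|^{2n} + |ψ(z)|²) / 2`.
-/

open MeasureTheory Real
open Set

section PolarCoordinates

variable {E : Type*} [NormedAddCommGroup E] [NormedSpace ℝ E]

theorem Complex.polarCoord_symm_eq_circleMap_s3 (p : ℝ × ℝ) :
    Complex.polarCoord.symm p = circleMap 0 p.1 p.2 := by
  simp [circleMap, Complex.exp_mul_I, ← Complex.ofReal_cos, ← Complex.ofReal_sin]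

theorem integrableOn_polarCoord_symm_smul {f : ℝ × ℝ → E} (hf : Integrable f) :
    IntegrableOn (fun p : ℝ × ℝ => p.1 • f (polarCoord.symm p)) polarCoord.target := by
  have hinj : InjOn polarCoord.symm polarCoord.target := by
    simpa using polarCoord.symm.injOn
  refine ((integrableOn_image_iff_integrableOn_abs_det_fderiv_smul volume
    polarCoord.open_target.measurableSet
    (fun p _ => (hasFDerivAt_polarCoord_symm p).hasFDerivWithinAt) hinj f).mp
    hf.integrableOn).congr_fun (fun p hp => ?_) polarCoord.open_target.measurableSet
  simp only [det_fderivPolarCoordSymm, abs_of_pos (show 0 < p.1 from hp.1)]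

theorem Complex.integrableOn_polarCoord_symm_smul {f : ℂ → E} (hf : Integrable f) :
    IntegrableOn (fun p : ℝ × ℝ => p.1 • f (Complex.polarCoord.symm p)) polarCoord.target :=
  _root_.integrableOn_polarCoord_symm_smul <|
    (Complex.volume_preserving_equiv_real_prod.symm.integrable_comp_emb
      Complex.measurableEquivRealProd.symm.measurableEmbedding).mpr hf

theorem integral_Ioo_neg_pi_pi_comp_circleMap (f : ℂ → E) (c : ℂ) (R : ℝ) :
    ∫ θ in Ioo (-π) π, f (circleMap c R θ) = (2 * π) • Real.circleAverage f c R := by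
  have hper : Function.Periodic (fun θ => f (circleMap c R θ)) (2 * π) :=
    fun θ => by simp [periodic_circleMap c R θ]
  rw [Real.circleAverage, smul_inv_smul₀ (by positivity), ← integral_Ioc_eq_integral_Ioo,
    ← intervalIntegral.integral_of_le (by linarith [pi_pos])]
  simpa [two_mul] using hper.intervalIntegral_add_eq (-π) 0

theorem integral_eq_integral_Ioi_circleAverage {f : ℂ → E} (hf : Integrable f) :
    ∫ z, f z = ∫ r in Ioi 0, (2 * π * r) • Real.circleAverage f 0 r := by
  have hpolar := Complex.integrableOn_polarCoord_symm_smul hf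
  rw [← Complex.integral_comp_polarCoord_symm, polarCoord_target, Measure.volume_eq_prod,
    setIntegral_prod _ (by simpa [polarCoord_target, Measure.volume_eq_prod] using hpolar)]
  refine setIntegral_congr_fun measurableSet_Ioi fun r _ => ?_
  simp only [Complex.polarCoord_symm_eq_circleMap_s3]
  rw [integral_smul, integral_Ioo_neg_pi_pi_comp_circleMap, smul_smul, mul_comm r]

end PolarCoordinates

theorem circleAverage_conj_pow_smul {E : Type*} [NormedAddCommGroup E] [NormedSpace ℂ E]
    [CompleteSpace E] {ψ : ℂ → E} {R : ℝ} (hR : 0 < R)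
    (hψ : DifferentiableOn ℂ ψ (Metric.closedBall 0 R)) (n : ℕ) :
    Real.circleAverage (fun z => starRingEnd ℂ z ^ n • ψ z) 0 R =
      ((R : ℂ) ^ (2 * n) / n.factorial) • iteratedDeriv n ψ 0 := by
  have hsphere : EqOn (fun z => z⁻¹ • starRingEnd ℂ z ^ n • ψ z)
      (fun z => (R : ℂ) ^ (2 * n) • (1 / z ^ (n + 1)) • ψ z) (Metric.sphere 0 R) := by
    intro z hz
    have hz0 : z ≠ 0 := ne_zero_of_mem_sphere hR.ne' ⟨z, hz⟩
    have hconj : starRingEnd ℂ z = (R : ℂ) ^ 2 / z := by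
      rw [eq_div_iff hz0, mul_comm, Complex.mul_conj', mem_sphere_zero_iff_norm.mp hz]
    simp only [smul_smul, hconj]
    congr 1
    rw [div_pow, ← pow_mul]
    field_simp
    ring
  have hcauchy := hψ.circleIntegral_one_div_sub_center_pow_smul hR n
  simp only [sub_zero] at hcauchy
  rw [Real.circleAverage_eq_circleIntegral hR.ne']
  simp only [sub_zero]
  rw [circleIntegral.integral_congr hR.le hsphere, circleIntegral.integral_smul, hcauchy,
    smul_smul, smul_smul]
  congr 1
  field_simp

theorem Complex.integrable_rpow_mul_exp_neg_rpow {p q : ℝ} (hp : 1 ≤ p) (hq : -2 < q) :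
    Integrable (fun x : ℂ => ‖x‖ ^ q * rexp (-‖x‖ ^ p)) := by
  refine Integrable.of_integral_ne_zero ?_
  rw [Complex.integral_rpow_mul_exp_neg_rpow hp hq]
  have hΓ := Real.Gamma_pos_of_pos (s := (q + 2) / p) (by apply div_pos <;> linarith)
  exact (mul_pos (div_pos (by positivity) (by linarith)) hΓ).ne'

theorem integral_Ioi_pow_mul_exp_neg_sq (n : ℕ) :
    ∫ r in Ioi (0 : ℝ), r ^ (2 * n + 1) * rexp (-r ^ 2) = n.factorial / 2 := by
  have h := integral_rpow_mul_exp_neg_rpow (p := 2) (q := (2 * n + 1 : ℕ)) two_pos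
    (by linarith [(2 * n + 1 : ℕ).cast_nonneg (α := ℝ)])
  simp only [rpow_natCast, rpow_two] at h
  rw [h, show ((2 * n + 1 : ℕ) + 1 : ℝ) / 2 = n + 1 by push_cast; ring,
    Real.Gamma_nat_eq_factorial]
  ring

theorem integrable_conj_pow_mul_mul_exp_neg_sq {ψ : ℂ → ℂ} (hψ : AEStronglyMeasurable ψ)
    (hint : Integrable (fun z : ℂ => ‖ψ z‖ ^ 2 * rexp (-‖z‖ ^ 2))) (n : ℕ) :
    Integrable (fun z : ℂ => starRingEnd ℂ z ^ n * ψ z * (rexp (-‖z‖ ^ 2) : ℂ)) := by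
  have hmoment : Integrable (fun z : ℂ => ‖z‖ ^ (2 * n) * rexp (-‖z‖ ^ 2)) := by
    have h := Complex.integrable_rpow_mul_exp_neg_rpow (p := 2) (q := (2 * n : ℕ)) one_le_two
      (by linarith [(2 * n : ℕ).cast_nonneg (α := ℝ)])
    simpa only [rpow_natCast, rpow_two] using h
  refine ((hmoment.add hint).div_const 2).mono' (by fun_prop) (ae_of_all _ fun z => ?_)
  have hamgm : ‖z‖ ^ n * ‖ψ z‖ ≤ (‖z‖ ^ (2 * n) + ‖ψ z‖ ^ 2) / 2 := by
    rw [pow_mul']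
    nlinarith [sq_nonneg (‖z‖ ^ n - ‖ψ z‖)]
  simp only [norm_mul, norm_pow, Complex.norm_conj, Complex.norm_real, norm_of_nonneg
    (exp_pos _).le]
  calc ‖z‖ ^ n * ‖ψ z‖ * rexp (-‖z‖ ^ 2)
      ≤ (‖z‖ ^ (2 * n) + ‖ψ z‖ ^ 2) / 2 * rexp (-‖z‖ ^ 2) := by gcongr
    _ = _ := by simp only [Pi.add_apply]; ring

theorem circleAverage_conj_pow_mul_mul_exp_neg_sq {ψ : ℂ → ℂ} {r : ℝ} (hr : 0 < r)
    (hψ : DifferentiableOn ℂ ψ (Metric.closedBall 0 r)) (n : ℕ) :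
    Real.circleAverage (fun z => starRingEnd ℂ z ^ n * ψ z * (rexp (-‖z‖ ^ 2) : ℂ)) 0 r =
      rexp (-r ^ 2) * r ^ (2 * n) * (iteratedDeriv n ψ 0 / n.factorial) := by
  have hsphere : EqOn (fun z => starRingEnd ℂ z ^ n * ψ z * (rexp (-‖z‖ ^ 2) : ℂ))
      (fun z => (rexp (-r ^ 2) : ℂ) • (starRingEnd ℂ z ^ n • ψ z)) (Metric.sphere 0 |r|) := by
    intro z hz
    simp only [mem_sphere_zero_iff_norm.mp hz, sq_abs, smul_eq_mul]
    ring
  rw [Real.circleAverage_congr_sphere hsphere, Real.circleAverage_fun_smul,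
    circleAverage_conj_pow_smul hr hψ n, smul_eq_mul, smul_eq_mul]
  ring

/-- If `ψ : ℂ → ℂ` is entire with finite Segal–Bargmann norm, then for every
natural number `n`, pairing the monomial `z^n` against `ψ` extracts the `n`-th Taylor
coefficient at the origin:
`(1/π) ∫_ℂ conj(z)^n ψ(z) e^{-|z|²} dA(z) = (iteratedDeriv n ψ) 0`,
which equals `n!` times the `n`-th Taylor coefficient `a_n = (iteratedDeriv n ψ 0)/n!`. -/
theorem segal_bargmann_taylor_coefficient (ψ : ℂ → ℂ)
    (hψ : Differentiable ℂ ψ)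
    (hint : Integrable (fun z : ℂ => ‖ψ z‖ ^ 2 * Real.exp (-(‖z‖) ^ 2))) :
    ∀ n : ℕ,
      ((1 / (π : ℂ)) * ∫ z : ℂ,
          (starRingEnd ℂ z) ^ n * ψ z * (Real.exp (-(‖z‖) ^ 2) : ℂ)) =
        iteratedDeriv n ψ 0 ∧
      iteratedDeriv n ψ 0 =
        (n.factorial : ℂ) * (iteratedDeriv n ψ 0 / (n.factorial : ℂ)) := by
  intro n
  have hfac : (n.factorial : ℂ) ≠ 0 := Nat.cast_ne_zero.mpr n.factorial_ne_zero
  refine ⟨?_, (mul_div_cancel₀ _ hfac).symm⟩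
  have hradial : ∀ r ∈ Ioi (0 : ℝ), (2 * π * r) • Real.circleAverage
      (fun z => starRingEnd ℂ z ^ n * ψ z * (rexp (-‖z‖ ^ 2) : ℂ)) 0 r =
      (r ^ (2 * n + 1) * rexp (-r ^ 2)) • (2 * π * (iteratedDeriv n ψ 0 / n.factorial)) :=
    fun r hr => by
      rw [circleAverage_conj_pow_mul_mul_exp_neg_sq hr hψ.differentiableOn n,
        Complex.real_smul, Complex.real_smul]
      push_cast
      ring
  rw [integral_eq_integral_Ioi_circleAverage
      (integrable_conj_pow_mul_mul_exp_neg_sq hψ.continuous.aestronglyMeasurable hint n),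
    setIntegral_congr_fun measurableSet_Ioi hradial, integral_smul_const,
    integral_Ioi_pow_mul_exp_neg_sq, Complex.real_smul]
  push_cast
  field_simp
end

section
/- Let ψ : ℂ → ℂ be entire with finite Segal–Bargmann norm. Then Parseval's identity holds with respect to the orthonormal monomial basis: (1/π)∫_ℂ |ψ(z)|² e^{-|z|²} dA(z) = Σ_{n=0}^∞ n! · |a_n|², where a_n = (iterated derivative of ψ of order n at 0)/n! is the n-th Taylor coefficient of ψ at 0. -/
open MeasureTheory Real Filter Complex Set

lemma sb_taylor_hasSum {ψ : ℂ → ℂ} (hψ : Differentiable ℂ ψ) (z : ℂ) :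
    HasSum (fun n : ℕ => (iteratedDeriv n ψ 0 / n.factorial) * z ^ n) (ψ z) := by
  have h := Complex.hasSum_taylorSeries_of_entire hψ 0 z
  refine h.congr_fun fun n => ?_
  simp [smul_eq_mul, div_eq_mul_inv]
  ring

lemma sb_coef_summable {ψ : ℂ → ℂ} (hψ : Differentiable ℂ ψ) {r : ℝ} (hr : 0 ≤ r) :
    Summable (fun n : ℕ => ‖iteratedDeriv n ψ 0 / (n.factorial : ℂ)‖ * r ^ n) := by
  set a : ℕ → ℂ := fun n => iteratedDeriv n ψ 0 / (n.factorial : ℂ) with ha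
  have hsum := (sb_taylor_hasSum hψ (2 * r : ℝ)).summable
  obtain ⟨C, hC⟩ : ∃ C, ∀ n, ‖a n * ((2 * r : ℝ) : ℂ) ^ n‖ ≤ C := by
    obtain ⟨C, hC⟩ := hsum.tendsto_atTop_zero.norm.bddAbove_range
    exact ⟨C, fun n => hC (Set.mem_range_self n)⟩
  refine Summable.of_nonneg_of_le (fun n => by positivity)
    (fun n => ?_) ((summable_geometric_two).mul_left C)
  have h2 : ‖a n * ((2 * r : ℝ) : ℂ) ^ n‖ = ‖a n‖ * (2 * r) ^ n := by
    rw [norm_mul, norm_pow, Complex.norm_real, Real.norm_eq_abs]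
    rw [_root_.abs_of_nonneg (by positivity : (0:ℝ) ≤ 2 * r)]
  have h3 : ‖a n‖ * (2 * r) ^ n ≤ C := h2 ▸ hC n
  have h4 : (2 * r) ^ n = 2 ^ n * r ^ n := by rw [mul_pow]
  calc ‖a n‖ * r ^ n = (‖a n‖ * (2 * r) ^ n) * (1 / 2) ^ n := by
        rw [h4]; field_simp; rw [mul_assoc (‖a n‖ * r ^ n), ← mul_pow]; norm_num
    _ ≤ C * (1 / 2) ^ n := by
        refine mul_le_mul_of_nonneg_right h3 (by positivity)

lemma sb_sq_summable {ψ : ℂ → ℂ} (hψ : Differentiable ℂ ψ) {r : ℝ} (hr : 0 ≤ r) :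
    Summable (fun n : ℕ => ‖iteratedDeriv n ψ 0 / (n.factorial : ℂ)‖ ^ 2 * r ^ (2 * n)) := by
  set a : ℕ → ℂ := fun n => iteratedDeriv n ψ 0 / (n.factorial : ℂ) with ha
  have h1 := sb_coef_summable hψ hr
  obtain ⟨D, hD⟩ : ∃ D, ∀ n, ‖a n‖ * r ^ n ≤ D := by
    obtain ⟨D, hD⟩ := h1.tendsto_atTop_zero.bddAbove_range
    exact ⟨D, fun n => hD (Set.mem_range_self n)⟩
  refine Summable.of_nonneg_of_le (fun n => by positivity) (fun n => ?_) (h1.mul_left D)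
  have : ‖a n‖ ^ 2 * r ^ (2 * n) = (‖a n‖ * r ^ n) * (‖a n‖ * r ^ n) := by
    rw [pow_mul]; ring
  rw [this]
  exact mul_le_mul_of_nonneg_right (hD n) (by positivity)

lemma sb_integral_exp_int (k : ℤ) :
    ∫ θ : ℝ in Set.Ioo (-π) π, Complex.exp (k * θ * Complex.I) =
      if k = 0 then ((2 * π : ℝ) : ℂ) else 0 := by
  have hIoo : ∫ θ : ℝ in Set.Ioo (-π) π, Complex.exp (k * θ * Complex.I) =
      ∫ θ : ℝ in (-π)..π, Complex.exp (k * θ * Complex.I) := by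
    rw [intervalIntegral.integral_of_le (by linarith [Real.pi_pos] : -π ≤ π),
      ← MeasureTheory.integral_Ioc_eq_integral_Ioo]
  rw [hIoo]
  rcases eq_or_ne k 0 with hk | hk
  · subst hk
    simp only [Int.cast_zero, zero_mul, Complex.exp_zero, if_pos rfl]
    rw [intervalIntegral.integral_const]
    rw [Complex.real_smul]
    push_cast
    ring
  · rw [if_neg hk]
    have h1 : ∀ θ : ℝ, (k : ℂ) * θ * Complex.I = ((k : ℂ) * Complex.I) * θ := by
      intro θ; ring
    simp_rw [h1]
    rw [integral_exp_mul_complex (by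
      simp [Complex.ext_iff, Int.cast_eq_zero, hk])]
    have h2 : (k : ℂ) * Complex.I * π = ((k : ℂ) * π) * Complex.I := by push_cast; ring
    have h3 : (k : ℂ) * Complex.I * (-π : ℝ) = -(((k : ℂ) * π) * Complex.I) := by
      push_cast; ring
    rw [h2, h3]
    have h4 : Complex.exp ((k : ℂ) * π * Complex.I) -
        Complex.exp (-((k : ℂ) * π * Complex.I)) = 2 * Complex.sinh ((k : ℂ) * π * Complex.I) := by
      simp only [Complex.sinh]; ring
    rw [h4, Complex.sinh_mul_I]
    have h5 : Complex.sin ((k : ℂ) * π) = 0 := by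
      have := Complex.sin_int_mul_pi k
      simpa using this
    rw [h5]
    simp

lemma sb_zpow (r : ℝ) (θ : ℝ) (n : ℕ) :
    ((r : ℂ) * Complex.exp (θ * Complex.I)) ^ n =
      ((r ^ n : ℝ) : ℂ) * Complex.exp ((n : ℂ) * θ * Complex.I) := by
  rw [mul_pow, ← Complex.exp_nat_mul]
  push_cast
  ring_nf

lemma sb_partial (a : ℕ → ℂ) (r : ℝ) (N : ℕ) :
    ∫ θ : ℝ in Set.Ioo (-π) π,
        ‖∑ n ∈ Finset.range N, a n * ((r : ℂ) * Complex.exp (θ * Complex.I)) ^ n‖ ^ 2 =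
      2 * π * ∑ n ∈ Finset.range N, ‖a n‖ ^ 2 * r ^ (2 * n) := by
  set z : ℝ → ℂ := fun θ => (r : ℂ) * Complex.exp (θ * Complex.I) with hz
  set S : ℝ → ℂ := fun θ => ∑ n ∈ Finset.range N, a n * z θ ^ n with hS
  have hcontz : Continuous z := by
    exact continuous_const.mul (Complex.continuous_exp.comp
      ((Complex.continuous_ofReal).mul continuous_const))
  have hcontS : Continuous S := by
    exact continuous_finset_sum _ fun n _ => continuous_const.mul (hcontz.pow n)
  -- rewrite the squared norm as the real part of S * conj S
  have h1 : ∀ θ, ‖S θ‖ ^ 2 = (S θ * (starRingEnd ℂ) (S θ)).re := by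
    intro θ
    rw [Complex.mul_conj, Complex.ofReal_re, Complex.normSq_eq_norm_sq]
  refine (integral_congr_ae (Filter.Eventually.of_forall h1)).trans ?_
  -- the complex integrand expanded as a double sum
  have hexp : ∀ θ : ℝ, S θ * (starRingEnd ℂ) (S θ) =
      ∑ n ∈ Finset.range N, ∑ m ∈ Finset.range N,
        (a n * (starRingEnd ℂ) (a m) * ((r ^ (n + m) : ℝ) : ℂ)) *
          Complex.exp ((((n : ℤ) - (m : ℤ) : ℤ) : ℂ) * θ * Complex.I) := by
    intro θ
    have hconj : ∀ m : ℕ, (starRingEnd ℂ) (Complex.exp ((m : ℂ) * θ * Complex.I)) =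
        Complex.exp (-((m : ℂ) * θ * Complex.I)) := by
      intro m
      rw [← Complex.exp_conj]
      congr 1
      simp [Complex.conj_I]
    rw [hS]
    simp only [map_sum]
    rw [Finset.sum_mul_sum]
    refine Finset.sum_congr rfl fun n _ => Finset.sum_congr rfl fun m _ => ?_
    rw [hz]
    simp only
    rw [sb_zpow, sb_zpow, map_mul, map_mul, Complex.conj_ofReal, hconj m]
    have e1 : Complex.exp ((n : ℂ) * θ * Complex.I) *
        Complex.exp (-((m : ℂ) * θ * Complex.I)) =
        Complex.exp ((((n : ℤ) - (m : ℤ) : ℤ) : ℂ) * θ * Complex.I) := by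
      rw [← Complex.exp_add]
      congr 1
      push_cast
      ring
    have e2 : ((r ^ (n + m) : ℝ) : ℂ) = ((r ^ n : ℝ) : ℂ) * ((r ^ m : ℝ) : ℂ) := by
      push_cast
      ring
    rw [← e1, e2]
    ring
  -- integrability of each term
  have hint_term : ∀ (c : ℂ) (k : ℤ), IntegrableOn
      (fun θ : ℝ => c * Complex.exp ((k : ℂ) * θ * Complex.I)) (Set.Ioo (-π) π) := by
    intro c k
    refine (Continuous.integrableOn_Icc ?_).mono_set Set.Ioo_subset_Icc_self
    exact continuous_const.mul (Complex.continuous_exp.comp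
      (((continuous_const : Continuous fun _ : ℝ => (k : ℂ)).mul
        Complex.continuous_ofReal).mul continuous_const))
  -- compute the complex integral
  have hcint : ∫ θ : ℝ in Set.Ioo (-π) π, S θ * (starRingEnd ℂ) (S θ) =
      ((2 * π * ∑ n ∈ Finset.range N, ‖a n‖ ^ 2 * r ^ (2 * n) : ℝ) : ℂ) := by
    simp_rw [hexp]
    rw [integral_finset_sum _ fun n _ => integrable_finset_sum _ fun m _ => hint_term _ _]
    have : ∀ n ∈ Finset.range N, ∫ θ : ℝ in Set.Ioo (-π) π,
        ∑ m ∈ Finset.range N, (a n * (starRingEnd ℂ) (a m) * ((r ^ (n + m) : ℝ) : ℂ)) *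
          Complex.exp ((((n : ℤ) - (m : ℤ) : ℤ) : ℂ) * θ * Complex.I) =
        (a n * (starRingEnd ℂ) (a n) * ((r ^ (n + n) : ℝ) : ℂ)) * ((2 * π : ℝ) : ℂ) := by
      intro n _hn
      rw [integral_finset_sum _ fun m _ => hint_term _ _]
      have hm : ∀ m ∈ Finset.range N, ∫ θ : ℝ in Set.Ioo (-π) π,
          (a n * (starRingEnd ℂ) (a m) * ((r ^ (n + m) : ℝ) : ℂ)) *
            Complex.exp ((((n : ℤ) - (m : ℤ) : ℤ) : ℂ) * θ * Complex.I) =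
          if n = m then (a n * (starRingEnd ℂ) (a n) * ((r ^ (n + n) : ℝ) : ℂ)) *
            ((2 * π : ℝ) : ℂ) else 0 := by
        intro m _hm
        rw [MeasureTheory.integral_const_mul, sb_integral_exp_int ((n : ℤ) - m)]
        rcases eq_or_ne n m with h | h
        · subst h
          simp
        · rw [if_neg (by omega), if_neg h, mul_zero]
      rw [Finset.sum_congr rfl hm, Finset.sum_ite_eq (Finset.range N) n
        (fun _ => (a n * (starRingEnd ℂ) (a n) * ((r ^ (n + n) : ℝ) : ℂ)) * ((2 * π : ℝ) : ℂ))]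
      rw [if_pos _hn]
    rw [Finset.sum_congr rfl this]
    push_cast
    rw [Finset.mul_sum]
    refine Finset.sum_congr rfl fun n _ => ?_
    rw [Complex.mul_conj, Complex.normSq_eq_norm_sq]
    push_cast
    ring_nf
  -- pass to real parts
  have hSint : IntegrableOn (fun θ : ℝ => S θ * (starRingEnd ℂ) (S θ)) (Set.Ioo (-π) π) := by
    refine (Continuous.integrableOn_Icc ?_).mono_set Set.Ioo_subset_Icc_self
    exact hcontS.mul (Complex.continuous_conj.comp hcontS)
  calc ∫ θ : ℝ in Set.Ioo (-π) π, (S θ * (starRingEnd ℂ) (S θ)).re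
      = (∫ θ : ℝ in Set.Ioo (-π) π, S θ * (starRingEnd ℂ) (S θ)).re := by
        exact integral_re hSint
    _ = 2 * π * ∑ n ∈ Finset.range N, ‖a n‖ ^ 2 * r ^ (2 * n) := by
        rw [hcint, Complex.ofReal_re]

lemma sb_circle_parseval {ψ : ℂ → ℂ} (hψ : Differentiable ℂ ψ) {r : ℝ} (hr : 0 < r) :
    HasSum (fun n : ℕ =>
        (2 * π) * (‖iteratedDeriv n ψ 0 / (n.factorial : ℂ)‖ ^ 2 * r ^ (2 * n)))
      (∫ θ : ℝ in Set.Ioo (-π) π, ‖ψ ((r : ℂ) * Complex.exp (θ * Complex.I))‖ ^ 2) := by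
  set a : ℕ → ℂ := fun n => iteratedDeriv n ψ 0 / (n.factorial : ℂ) with ha
  set z : ℝ → ℂ := fun θ => (r : ℂ) * Complex.exp (θ * Complex.I) with hz
  have hcontz : Continuous z :=
    continuous_const.mul (Complex.continuous_exp.comp
      ((Complex.continuous_ofReal).mul continuous_const))
  have habs : ∀ θ, ‖z θ‖ = r := by
    intro θ
    rw [hz]
    simp only [norm_mul, Complex.norm_real, Real.norm_eq_abs, Complex.norm_exp_ofReal_mul_I,
      mul_one]
    exact abs_of_pos hr
  set A : ℝ := ∑' n : ℕ, ‖a n‖ * r ^ n with hA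
  have hsumA : Summable (fun n => ‖a n‖ * r ^ n) := sb_coef_summable hψ hr.le
  -- bound on partial sums
  have hSbound : ∀ N θ, ‖∑ n ∈ Finset.range N, a n * z θ ^ n‖ ≤ A := by
    intro N θ
    calc ‖∑ n ∈ Finset.range N, a n * z θ ^ n‖
        ≤ ∑ n ∈ Finset.range N, ‖a n * z θ ^ n‖ := norm_sum_le _ _
      _ = ∑ n ∈ Finset.range N, ‖a n‖ * r ^ n := by
          refine Finset.sum_congr rfl fun n _ => ?_
          rw [norm_mul, norm_pow, habs]
      _ ≤ A := hsumA.sum_le_tsum _ (fun n _ => by positivity)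
  -- dominated convergence
  have hDC : Tendsto
      (fun N => ∫ θ : ℝ in Set.Ioo (-π) π, ‖∑ n ∈ Finset.range N, a n * z θ ^ n‖ ^ 2)
      atTop (nhds (∫ θ : ℝ in Set.Ioo (-π) π, ‖ψ (z θ)‖ ^ 2)) := by
    refine MeasureTheory.tendsto_integral_of_dominated_convergence (fun _ => A ^ 2)
      (fun N => ?_) ?_ (fun N => ?_) ?_
    · exact ((continuous_finset_sum _ fun n _ =>
        continuous_const.mul (hcontz.pow n)).norm.pow 2).aestronglyMeasurable
    · exact integrableOn_const measure_Ioo_lt_top.ne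
    · refine Filter.Eventually.of_forall fun θ => ?_
      rw [Real.norm_eq_abs, _root_.abs_of_nonneg (by positivity : (0:ℝ) ≤ ‖∑ n ∈ Finset.range N, a n * z θ ^ n‖ ^ 2)]
      have h0 : (0:ℝ) ≤ ‖∑ n ∈ Finset.range N, a n * z θ ^ n‖ := norm_nonneg _
      exact pow_le_pow_left₀ h0 (hSbound N θ) 2
    · refine Filter.Eventually.of_forall fun θ => ?_
      have := (sb_taylor_hasSum hψ (z θ)).tendsto_sum_nat
      exact (this.norm.pow 2)
  -- identify the limit
  have hsum2 : Summable (fun n => ‖a n‖ ^ 2 * r ^ (2 * n)) := sb_sq_summable hψ hr.le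
  have hpart : ∀ N,
      ∫ θ : ℝ in Set.Ioo (-π) π, ‖∑ n ∈ Finset.range N, a n * z θ ^ n‖ ^ 2 =
      ∑ n ∈ Finset.range N, 2 * π * (‖a n‖ ^ 2 * r ^ (2 * n)) := by
    intro N
    rw [sb_partial a r N, Finset.mul_sum]
  have hS2 : HasSum (fun n => 2 * π * (‖a n‖ ^ 2 * r ^ (2 * n)))
      (∑' n, 2 * π * (‖a n‖ ^ 2 * r ^ (2 * n))) := (hsum2.mul_left _).hasSum
  have hT := hS2.tendsto_sum_nat
  simp_rw [hpart] at hDC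
  have := tendsto_nhds_unique hT hDC
  rw [this] at hS2
  exact hS2

lemma sb_lintegral_polar (f : ℝ × ℝ → ENNReal) :
    ∫⁻ p in polarCoord.target, ENNReal.ofReal p.1 * f (polarCoord.symm p) = ∫⁻ p, f p := by
  set B : ℝ × ℝ → ℝ × ℝ →L[ℝ] ℝ × ℝ := fun p =>
    LinearMap.toContinuousLinearMap (Matrix.toLin (Module.Basis.finTwoProd ℝ) (Module.Basis.finTwoProd ℝ)
      !![Real.cos p.2, -p.1 * Real.sin p.2; Real.sin p.2, p.1 * Real.cos p.2]) with hB
  have hder : ∀ p ∈ polarCoord.target, HasFDerivWithinAt polarCoord.symm (B p)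
      polarCoord.target p := fun p _ => (hasFDerivAt_polarCoord_symm p).hasFDerivWithinAt
  have B_det : ∀ p, (B p).det = p.1 := by
    intro p
    conv_rhs => rw [← one_mul p.1, ← Real.cos_sq_add_sin_sq p.2]
    simp only [hB, neg_mul, LinearMap.det_toContinuousLinearMap, LinearMap.det_toLin,
      Matrix.det_fin_two_of, sub_neg_eq_add]
    ring
  calc ∫⁻ p in polarCoord.target, ENNReal.ofReal p.1 * f (polarCoord.symm p)
      = ∫⁻ p in polarCoord.target, ENNReal.ofReal |(B p).det| * f (polarCoord.symm p) := by
        refine setLIntegral_congr_fun polarCoord.open_target.measurableSet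
          (fun p hp => ?_)
        rw [B_det, abs_of_pos hp.1]
    _ = ∫⁻ p in polarCoord.symm '' polarCoord.target, f p := by
        rw [lintegral_image_eq_lintegral_abs_det_fderiv_mul volume
          polarCoord.open_target.measurableSet hder polarCoord.symm.injOn f]
    _ = ∫⁻ p in polarCoord.source, f p := by
        rw [OpenPartialHomeomorph.symm_image_target_eq_source]
    _ = ∫⁻ p, f p := by
        rw [setLIntegral_congr polarCoord_source_ae_eq_univ, setLIntegral_univ]

lemma sb_lintegral_polar_complex (f : ℂ → ENNReal) (hf : Measurable f) :
    ∫⁻ p in polarCoord.target, ENNReal.ofReal p.1 * f (Complex.polarCoord.symm p) =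
      ∫⁻ z, f z := by
  rw [← (Complex.volume_preserving_equiv_real_prod.symm).lintegral_comp hf,
    ← sb_lintegral_polar (fun p => f (Complex.measurableEquivRealProd.symm p))]
  rfl

lemma sb_polar_symm_eq (p : ℝ × ℝ) :
    Complex.polarCoord.symm p = (p.1 : ℂ) * Complex.exp (p.2 * Complex.I) := by
  rw [Complex.polarCoord_symm_apply, Complex.exp_mul_I]
  push_cast
  ring

/-- The Gaussian moment integral. -/
lemma sb_moment (n : ℕ) :
    ∫ r in Set.Ioi (0:ℝ), r ^ (2 * n + 1) * Real.exp (-r ^ 2) = (n.factorial : ℝ) / 2 := by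
  have h := _root_.integral_rpow_mul_exp_neg_rpow (p := 2) (q := (2 * n + 1 : ℝ))
    two_pos (by have := Nat.cast_nonneg (α := ℝ) n; linarith)
  have hcongr : ∫ r in Set.Ioi (0:ℝ), r ^ (2 * n + 1) * Real.exp (-r ^ 2) =
      ∫ r in Set.Ioi (0:ℝ), r ^ ((2 * n + 1 : ℕ) : ℝ) * Real.exp (-r ^ (2:ℝ)) := by
    refine setIntegral_congr_fun measurableSet_Ioi fun x hx => ?_
    rw [Real.rpow_natCast, show ((2:ℝ)) = ((2:ℕ):ℝ) by norm_num, Real.rpow_natCast]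
  rw [hcongr]
  push_cast
  rw [h]
  have : (2 * (n:ℝ) + 1 + 1) / 2 = (n:ℝ) + 1 := by ring
  rw [this, Real.Gamma_nat_eq_factorial n]
  ring

lemma sb_moment_integrable (n : ℕ) :
    IntegrableOn (fun r : ℝ => r ^ (2 * n + 1) * Real.exp (-r ^ 2)) (Set.Ioi 0) := by
  have h := integrableOn_rpow_mul_exp_neg_rpow (p := 2) (s := (2 * n + 1 : ℝ))
    (by have := Nat.cast_nonneg (α := ℝ) n; linarith) two_pos
  refine h.congr_fun (fun x hx => ?_) measurableSet_Ioi
  beta_reduce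
  rw [show (2 * (n:ℝ) + 1) = ((2 * n + 1 : ℕ) : ℝ) by push_cast; ring, Real.rpow_natCast,
    show ((2:ℝ)) = ((2:ℕ) : ℝ) by norm_num, Real.rpow_natCast]

/-- If `ψ : ℂ → ℂ` is entire with finite Segal–Bargmann norm, then Parseval's
identity holds with respect to the orthonormal monomial basis:
`(1/π) ∫_ℂ |ψ(z)|² e^{-|z|²} dA(z) = Σ_{n} n! · |a_n|²`, where
`a_n = (iteratedDeriv n ψ 0)/n!` is the `n`-th Taylor coefficient of `ψ` at `0`. -/
theorem segal_bargmann_parseval (ψ : ℂ → ℂ)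
    (hψ : Differentiable ℂ ψ)
    (hint : Integrable (fun z : ℂ => ‖ψ z‖ ^ 2 * Real.exp (-(‖z‖) ^ 2))) :
    (1 / π) * (∫ z : ℂ, ‖ψ z‖ ^ 2 * Real.exp (-(‖z‖) ^ 2)) =
      ∑' n : ℕ, (n.factorial : ℝ) *
        ‖iteratedDeriv n ψ 0 / (n.factorial : ℂ)‖ ^ 2 := by
  have hψc : Continuous ψ := hψ.continuous
  set b : ℕ → ℝ := fun n => ‖iteratedDeriv n ψ 0 / (n.factorial : ℂ)‖ ^ 2 with hb
  have hbnn : ∀ n, 0 ≤ b n := fun n => by positivity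
  set f : ℂ → ℝ := fun z => ‖ψ z‖ ^ 2 * Real.exp (-(‖z‖) ^ 2) with hf
  have hfc : Continuous f := by
    exact ((hψc.norm.pow 2)).mul ((Real.continuous_exp.comp
      ((continuous_norm.pow 2).neg)))
  have hfnn : ∀ z, 0 ≤ f z := fun z => by positivity
  set F : ℂ → ENNReal := fun z => ENNReal.ofReal (f z) with hF
  have hFm : Measurable F := ENNReal.measurable_ofReal.comp hfc.measurable
  -- the term function
  set t : ℕ → ℝ → ℝ := fun n r => (2 * π * r * Real.exp (-r ^ 2)) * (b n * r ^ (2 * n))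
    with ht
  have htnn : ∀ n r, r ∈ Set.Ioi (0:ℝ) → 0 ≤ t n r := fun n r hr => by
    have : (0:ℝ) < r := hr
    positivity
  -- Step 1: real integral to lintegral
  have E1 : ENNReal.ofReal (∫ z : ℂ, f z) = ∫⁻ z : ℂ, F z :=
    MeasureTheory.ofReal_integral_eq_lintegral_ofReal hint
      (Filter.Eventually.of_forall hfnn)
  -- Step 2: polar coordinates
  have E2 : ∫⁻ z : ℂ, F z =
      ∫⁻ p in polarCoord.target, ENNReal.ofReal p.1 * F (Complex.polarCoord.symm p) :=
    (sb_lintegral_polar_complex F hFm).symm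
  -- H: explicit form of the polar integrand
  set H : ℝ × ℝ → ENNReal := fun p =>
    ENNReal.ofReal p.1 * ENNReal.ofReal
      (‖ψ ((p.1 : ℂ) * Complex.exp (p.2 * Complex.I))‖ ^ 2 * Real.exp (-p.1 ^ 2)) with hH
  have hHeq : ∀ p : ℝ × ℝ, ENNReal.ofReal p.1 * F (Complex.polarCoord.symm p) = H p := by
    intro p
    rw [hF]
    simp only
    rw [hf]
    simp only
    rw [show ‖Complex.polarCoord.symm p‖ = |p.1| from
      Complex.norm_polarCoord_symm p, _root_.sq_abs, sb_polar_symm_eq]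
  have hHm : Measurable H := by
    refine (ENNReal.measurable_ofReal.comp measurable_fst).mul
      (ENNReal.measurable_ofReal.comp ?_)
    refine Continuous.measurable ?_
    refine (Continuous.pow ?_ 2).mul ?_
    · exact (hψc.comp ((Complex.continuous_ofReal.comp continuous_fst).mul
        (Complex.continuous_exp.comp
          ((Complex.continuous_ofReal.comp continuous_snd).mul continuous_const)))).norm
    · exact Real.continuous_exp.comp ((continuous_fst.pow 2).neg)
  -- Step 3: Tonelli
  have E3 : ∫⁻ p in polarCoord.target, ENNReal.ofReal p.1 * F (Complex.polarCoord.symm p) =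
      ∫⁻ r in Set.Ioi (0:ℝ), ∫⁻ θ in Set.Ioo (-π) π, H (r, θ) := by
    rw [lintegral_congr hHeq, polarCoord_target, Measure.volume_eq_prod,
      ← Measure.prod_restrict, MeasureTheory.lintegral_prod _ hHm.aemeasurable]
  -- Step 4: inner integral for fixed r > 0
  have E4 : ∀ r : ℝ, r ∈ Set.Ioi (0:ℝ) →
      ∫⁻ θ in Set.Ioo (-π) π, H (r, θ) = ∑' n : ℕ, ENNReal.ofReal (t n r) := by
    intro r hr
    rw [Set.mem_Ioi] at hr
    have hq_int : IntegrableOn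
        (fun θ : ℝ => r * (‖ψ ((r : ℂ) * Complex.exp (θ * Complex.I))‖ ^ 2 *
          Real.exp (-r ^ 2))) (Set.Ioo (-π) π) := by
      refine (Continuous.integrableOn_Icc ?_).mono_set Set.Ioo_subset_Icc_self
      refine continuous_const.mul (Continuous.mul ?_ continuous_const)
      exact (hψc.comp (continuous_const.mul (Complex.continuous_exp.comp
        (Complex.continuous_ofReal.mul continuous_const)))).norm.pow 2
    have step1 : ∫⁻ θ in Set.Ioo (-π) π, H (r, θ) =
        ENNReal.ofReal (∫ θ in Set.Ioo (-π) π,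
          r * (‖ψ ((r : ℂ) * Complex.exp (θ * Complex.I))‖ ^ 2 * Real.exp (-r ^ 2))) := by
      rw [MeasureTheory.ofReal_integral_eq_lintegral_ofReal hq_int
        (Filter.Eventually.of_forall fun θ => by positivity)]
      refine lintegral_congr fun θ => ?_
      rw [hH]
      simp only
      rw [ENNReal.ofReal_mul hr.le]
    have step2 : ∫ θ in Set.Ioo (-π) π,
        r * (‖ψ ((r : ℂ) * Complex.exp (θ * Complex.I))‖ ^ 2 * Real.exp (-r ^ 2)) =
        (r * Real.exp (-r ^ 2)) *
          ∫ θ in Set.Ioo (-π) π, ‖ψ ((r : ℂ) * Complex.exp (θ * Complex.I))‖ ^ 2 := by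
      rw [← MeasureTheory.integral_const_mul]
      refine setIntegral_congr_fun measurableSet_Ioo fun θ _ => ?_
      ring
    have step3 : ∫ θ in Set.Ioo (-π) π, ‖ψ ((r : ℂ) * Complex.exp (θ * Complex.I))‖ ^ 2 =
        ∑' n : ℕ, (2 * π) * (b n * r ^ (2 * n)) := (sb_circle_parseval hψ hr).tsum_eq.symm
    have step4 : (r * Real.exp (-r ^ 2)) * ∑' n : ℕ, (2 * π) * (b n * r ^ (2 * n)) =
        ∑' n : ℕ, t n r := by
      rw [← tsum_mul_left]
      refine tsum_congr fun n => ?_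
      rw [ht]
      simp only
      ring
    rw [step1, step2, step3, step4]
    have hsum_t : Summable (fun n => t n r) := by
      have := (sb_sq_summable hψ hr.le).mul_left (2 * π * r * Real.exp (-r ^ 2))
      exact this
    rw [ENNReal.ofReal_tsum_of_nonneg (fun n => htnn n r hr) hsum_t]
  -- Step 5: swap sum and integral
  have E5 : ∫⁻ r in Set.Ioi (0:ℝ), ∫⁻ θ in Set.Ioo (-π) π, H (r, θ) =
      ∑' n : ℕ, ∫⁻ r in Set.Ioi (0:ℝ), ENNReal.ofReal (t n r) := by
    rw [setLIntegral_congr_fun measurableSet_Ioi E4]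
    exact MeasureTheory.lintegral_tsum fun n =>
      (ENNReal.measurable_ofReal.comp (by fun_prop : Measurable (t n))).aemeasurable
  -- Step 6: evaluate each lintegral
  have E6 : ∀ n : ℕ, ∫⁻ r in Set.Ioi (0:ℝ), ENNReal.ofReal (t n r) =
      ENNReal.ofReal (π * ((n.factorial : ℝ) * b n)) := by
    intro n
    have hshape : ∀ r : ℝ, t n r = (2 * π * b n) * (r ^ (2 * n + 1) * Real.exp (-r ^ 2)) := by
      intro r
      rw [ht]
      simp only
      ring
    have hint_t : IntegrableOn (fun r => t n r) (Set.Ioi (0:ℝ)) := by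
      simp_rw [hshape]
      exact (sb_moment_integrable n).const_mul _
    rw [← MeasureTheory.ofReal_integral_eq_lintegral_ofReal hint_t
      (ae_restrict_of_forall_mem measurableSet_Ioi fun r hr => htnn n r hr)]
    congr 1
    calc ∫ r in Set.Ioi (0:ℝ), t n r
        = ∫ r in Set.Ioi (0:ℝ), (2 * π * b n) * (r ^ (2 * n + 1) * Real.exp (-r ^ 2)) := by
          simp_rw [hshape]
      _ = (2 * π * b n) * ((n.factorial : ℝ) / 2) := by
          rw [MeasureTheory.integral_const_mul, sb_moment n]
      _ = π * ((n.factorial : ℝ) * b n) := by ring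
  -- Combine
  have key : ENNReal.ofReal (∫ z : ℂ, f z) =
      ∑' n : ℕ, ENNReal.ofReal (π * ((n.factorial : ℝ) * b n)) := by
    rw [E1, E2, E3, E5]
    exact tsum_congr E6
  -- Extract summability
  have hfin : (∑' n : ℕ, ENNReal.ofReal (π * ((n.factorial : ℝ) * b n))) ≠ ⊤ := by
    rw [← key]
    exact ENNReal.ofReal_ne_top
  have hsummable : Summable (fun n : ℕ => π * ((n.factorial : ℝ) * b n)) := by
    have h1 := ENNReal.summable_toReal hfin
    refine h1.congr fun n => ?_
    rw [ENNReal.toReal_ofReal (by positivity)]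
  have hofreal : ENNReal.ofReal (∑' n : ℕ, π * ((n.factorial : ℝ) * b n)) =
      ∑' n : ℕ, ENNReal.ofReal (π * ((n.factorial : ℝ) * b n)) :=
    ENNReal.ofReal_tsum_of_nonneg (fun n => by positivity) hsummable
  have hreal : ∫ z : ℂ, f z = ∑' n : ℕ, π * ((n.factorial : ℝ) * b n) := by
    have h2 : ENNReal.ofReal (∫ z : ℂ, f z) =
        ENNReal.ofReal (∑' n : ℕ, π * ((n.factorial : ℝ) * b n)) := by
      rw [key, hofreal]
    have hnn1 : 0 ≤ ∫ z : ℂ, f z := integral_nonneg hfnn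
    have hnn2 : 0 ≤ ∑' n : ℕ, π * ((n.factorial : ℝ) * b n) :=
      tsum_nonneg fun n => by positivity
    exact (ENNReal.ofReal_eq_ofReal_iff hnn1 hnn2).mp h2
  rw [show (∫ z : ℂ, ‖ψ z‖ ^ 2 * Real.exp (-(‖z‖) ^ 2)) = ∫ z : ℂ, f z from rfl,
    hreal, tsum_mul_left]
  rw [show (∑' n : ℕ, (n.factorial : ℝ) * ‖iteratedDeriv n ψ 0 / (n.factorial : ℂ)‖ ^ 2) =
    ∑' n : ℕ, (n.factorial : ℝ) * b n from rfl]
  field_simp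
end

section
/- Let ψ : ℝ → ℂ be integrable. Then the Segal–Bargmann transform (Tψ)(z) = π^{-1/4} ∫_ℝ exp(-z²/2 - x²/2 + √2·x·z) ψ(x) dx is an entire function of z ∈ ℂ (complex-differentiable at every point of ℂ). -/
open MeasureTheory Real

/-!
Splitting off the entire factor `exp (-z²/2)`, the transform is `z ↦ L(√2 z)` where
`L w = ∫ exp (w x) g x dx` with `g x = exp (-x²/2) ψ x`. The Gaussian factor makes
`exp (c |x|) |g x|` integrable for every `c`, which dominates the `w`-derivative
`x exp (w x) g x` locally uniformly, so `L` is entire by differentiation under the integral.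
-/

open scoped Complex

theorem norm_cexp_mul_ofReal_le (z : ℂ) (x : ℝ) : ‖cexp (z * x)‖ ≤ exp (‖z‖ * |x|) := by
  rw [Complex.norm_exp]
  gcongr
  calc (z * x).re = z.re * x := by simp
    _ ≤ |z.re| * |x| := by rw [← abs_mul]; exact le_abs_self _
    _ ≤ ‖z‖ * |x| := by gcongr; exact Complex.abs_re_le_norm z

theorem differentiable_integral_cexp_mul {μ : Measure ℝ} {g : ℝ → ℂ}
    (hg : AEStronglyMeasurable g μ)
    (hexp : ∀ c : ℝ, Integrable (fun x => exp (c * |x|) * ‖g x‖) μ) :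
    Differentiable ℂ (fun w : ℂ => ∫ x, cexp (w * x) * g x ∂μ) := by
  intro w₀
  have hF_meas : ∀ w : ℂ, AEStronglyMeasurable (fun x : ℝ => cexp (w * x) * g x) μ :=
    fun w => (by fun_prop : Continuous fun x : ℝ => cexp (w * x)).aestronglyMeasurable.mul hg
  have hF_int : Integrable (fun x : ℝ => cexp (w₀ * x) * g x) μ :=
    (hexp ‖w₀‖).mono' (hF_meas w₀) (ae_of_all _ fun x => by
      rw [norm_mul]; gcongr; exact norm_cexp_mul_ofReal_le w₀ x)
  have hF'_meas : AEStronglyMeasurable (fun x : ℝ => (x : ℂ) * (cexp (w₀ * x) * g x)) μ :=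
    (by fun_prop : Continuous fun x : ℝ => (x : ℂ)).aestronglyMeasurable.mul (hF_meas w₀)
  have hF'_le : ∀ x : ℝ, ∀ w ∈ Metric.ball w₀ 1,
      ‖(x : ℂ) * (cexp (w * x) * g x)‖ ≤ exp ((‖w₀‖ + 2) * |x|) * ‖g x‖ := by
    intro x w hw
    have hw : ‖w‖ ≤ ‖w₀‖ + 1 := by
      have := norm_le_norm_add_norm_sub' w w₀
      rw [mem_ball_iff_norm] at hw
      linarith
    calc ‖(x : ℂ) * (cexp (w * x) * g x)‖ = |x| * ‖cexp (w * x)‖ * ‖g x‖ := by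
          rw [norm_mul, norm_mul, Complex.norm_real, Real.norm_eq_abs, mul_assoc]
      _ ≤ exp |x| * exp ((‖w₀‖ + 1) * |x|) * ‖g x‖ := by
          gcongr
          · linarith [add_one_le_exp |x|]
          · exact (norm_cexp_mul_ofReal_le w x).trans (by gcongr)
      _ = exp ((‖w₀‖ + 2) * |x|) * ‖g x‖ := by rw [← exp_add]; ring_nf
  have hF_deriv : ∀ x : ℝ, ∀ w : ℂ,
      HasDerivAt (fun w => cexp (w * x) * g x) ((x : ℂ) * (cexp (w * x) * g x)) w :=
    fun x w => ((hasDerivAt_mul_const (x : ℂ)).cexp.mul_const (g x)).congr_deriv (by ring)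
  exact (hasDerivAt_integral_of_dominated_loc_of_deriv_le (Metric.ball_mem_nhds w₀ one_pos)
    (.of_forall hF_meas) hF_int hF'_meas (ae_of_all _ hF'_le) (hexp _)
    (ae_of_all _ fun x w _ => hF_deriv x w)).2.differentiableAt

theorem integrable_exp_mul_abs_mul_norm_gaussian_mul {μ : Measure ℝ} {ψ : ℝ → ℂ}
    (hψ : Integrable ψ μ) (c : ℝ) :
    Integrable (fun x => exp (c * |x|) * ‖cexp (-(x : ℂ) ^ 2 / 2) * ψ x‖) μ := by
  have hgauss (x : ℝ) : ‖cexp (-(x : ℂ) ^ 2 / 2)‖ = exp (-x ^ 2 / 2) := by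
    rw [Complex.norm_exp]; norm_cast
  simp_rw [norm_mul, hgauss, ← mul_assoc, ← exp_add]
  refine hψ.norm.bdd_mul (c := exp (c ^ 2 / 2)) (by fun_prop) (ae_of_all _ fun x => ?_)
  rw [Real.norm_of_nonneg (exp_pos _).le]
  gcongr
  -- `c |x| - x²/2 ≤ c²/2`, with equality at `|x| = c`
  nlinarith [sq_nonneg (|x| - c), sq_abs x]

/-- If `ψ : ℝ → ℂ` is integrable, then its Segal–Bargmann transform
`(Tψ)(z) = π^{-1/4} ∫_ℝ exp(-z²/2 - x²/2 + √2·x·z) ψ(x) dx` is an entire function of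
`z ∈ ℂ`. -/
theorem segal_bargmann_transform_entire (ψ : ℝ → ℂ)
    (hint : Integrable ψ) :
    Differentiable ℂ (fun z : ℂ =>
      ((π ^ (-(1 / 4 : ℝ)) : ℝ) : ℂ) *
        ∫ x : ℝ, Complex.exp (-z ^ 2 / 2 - (x : ℂ) ^ 2 / 2 +
          (Real.sqrt 2 : ℂ) * (x : ℂ) * z) * ψ x) := by
  set g : ℝ → ℂ := fun x => cexp (-(x : ℂ) ^ 2 / 2) * ψ x
  have hL : Differentiable ℂ (fun w : ℂ => ∫ x : ℝ, cexp (w * x) * g x) :=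
    differentiable_integral_cexp_mul ((by fun_prop : Continuous fun x : ℝ =>
      cexp (-(x : ℂ) ^ 2 / 2)).aestronglyMeasurable.mul hint.aestronglyMeasurable)
      (integrable_exp_mul_abs_mul_norm_gaussian_mul hint)
  have hsplit : ∀ z : ℂ, ∫ x : ℝ, cexp (-z ^ 2 / 2 - (x : ℂ) ^ 2 / 2 +
      (Real.sqrt 2 : ℂ) * (x : ℂ) * z) * ψ x =
      cexp (-z ^ 2 / 2) * ∫ x : ℝ, cexp ((Real.sqrt 2 * z) * x) * g x := by
    intro z
    rw [← integral_const_mul]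
    congr 1 with x
    simp only [g, ← mul_assoc, ← Complex.exp_add]
    ring_nf
  simp_rw [hsplit]
  exact (differentiable_const _).mul <| (by fun_prop : Differentiable ℂ fun z : ℂ =>
    cexp (-z ^ 2 / 2)).mul <| hL.comp (differentiable_id.const_mul _)
end

section
/- For each natural number n, let H_n(x) = (-1)^n e^{x²} · (d/dx)^n(e^{-x²}) be the n-th physicists' Hermite polynomial (Rodrigues formula), and let ψ_n(x) = (√π · 2^n · n!)^{-1/2} e^{-x²/2} H_n(x) be the n-th Hermite function. Then the Segal–Bargmann transform maps ψ_n to the normalized monomial: π^{-1/4} ∫_ℝ exp(-z²/2 - x²/2 + √2·x·z) ψ_n(x) dx = z^n/√(n!) for all z ∈ ℂ. -/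
/-!
Split the kernel as `e^{-z²/2} e^{a x}` with `a = √2 z`; the factor `e^{-x²/2}` of `ψ_n` and
the `e^{x²}` of the Rodrigues formula cancel against the kernel's `e^{-x²/2}`, leaving
`(-1)^n ∫ e^{a x} (d/dx)^n e^{-x²} dx`. Since every derivative of `e^{-x²}` is a polynomial
times `e^{-x²}`, `n` integrations by parts have no boundary terms and give
`(-a)^n ∫ e^{a x - x²} dx = (-a)^n √π e^{a²/4}`. As `a²/4 = z²/2`, the exponentials cancel
and the constants collapse to `1/√(n!)`.
-/

open MeasureTheory Real Polynomial Complex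
open scoped ContDiff

lemma exists_iteratedDeriv_exp_eval_eq (q : ℝ[X]) (n : ℕ) :
    ∃ p : ℝ[X], iteratedDeriv n (fun y => Real.exp (q.eval y)) =
      fun x => p.eval x * Real.exp (q.eval x) := by
  induction n with
  | zero => exact ⟨1, by simp⟩
  | succ n ih =>
    obtain ⟨p, hp⟩ := ih
    refine ⟨derivative p + p * derivative q, funext fun x => ?_⟩
    have h : HasDerivAt (fun x => p.eval x * Real.exp (q.eval x))
        ((derivative p).eval x * Real.exp (q.eval x) +
          p.eval x * (Real.exp (q.eval x) * (derivative q).eval x)) x :=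
      (p.hasDerivAt x).mul (q.hasDerivAt x).exp
    rw [iteratedDeriv_succ, hp, h.deriv, eval_add, eval_mul]
    ring

lemma pow_abs_le_factorial_mul_exp_add_exp_neg (k : ℕ) (x : ℝ) :
    |x| ^ k ≤ k.factorial * (Real.exp x + Real.exp (-x)) := by
  have h := Real.pow_div_factorial_le_exp _ (abs_nonneg x) k
  rw [div_le_iff₀ (by positivity)] at h
  nlinarith [Real.exp_abs_le x, (Nat.cast_pos (α := ℝ)).2 k.factorial_pos]

lemma integrable_pow_mul_cexp_quadratic {b : ℂ} (hb : b.re < 0) (c d : ℂ) (k : ℕ) :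
    Integrable fun x : ℝ => (x : ℂ) ^ k * cexp (b * x ^ 2 + c * x + d) := by
  -- Shifting `c` by `±1` multiplies the modulus by `e^{±x}`, and `e^x + e^{-x} ≥ |x|^k / k!`.
  have hshift (s x : ℝ) : ‖cexp (b * x ^ 2 + (c + s) * x + d)‖ =
      Real.exp (s * x) * ‖cexp (b * x ^ 2 + c * x + d)‖ := by
    rw [Complex.norm_exp, Complex.norm_exp, ← Real.exp_add]
    congr 1
    simp only [add_re, mul_re, ofReal_re, add_im, ofReal_im, add_zero, mul_zero, sub_zero]
    ring
  have hdom := ((integrable_cexp_quadratic' hb (c + (1 : ℝ)) d).norm.add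
    (integrable_cexp_quadratic' hb (c + (-1 : ℝ)) d).norm).const_mul (k.factorial : ℝ)
  refine hdom.mono' (by fun_prop) (ae_of_all _ fun x => ?_)
  simp only [hshift, Pi.add_apply, norm_mul, norm_pow, Complex.norm_real, Real.norm_eq_abs,
    one_mul, neg_one_mul]
  nlinarith [pow_abs_le_factorial_mul_exp_add_exp_neg k x,
    norm_nonneg (cexp (b * x ^ 2 + c * x + d))]

lemma integrable_eval_mul_cexp_quadratic (p : ℝ[X]) {b : ℂ} (hb : b.re < 0) (c d : ℂ) :
    Integrable fun x : ℝ => ((p.eval x : ℝ) : ℂ) * cexp (b * x ^ 2 + c * x + d) := by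
  induction p using Polynomial.induction_on' with
  | add p q hp hq => simpa only [eval_add, ofReal_add, add_mul] using hp.fun_add hq
  | monomial k a =>
    simpa only [eval_monomial, ofReal_mul, ofReal_pow, mul_assoc]
      using (integrable_pow_mul_cexp_quadratic hb c d k).const_mul (a : ℂ)

lemma integral_cexp_mul_iteratedDeriv {f : ℝ → ℝ} (hf : ContDiff ℝ ∞ f) (a : ℂ)
    (hint : ∀ k, Integrable fun x : ℝ => cexp (a * x) * ((iteratedDeriv k f x : ℝ) : ℂ))
    (n : ℕ) :
    ∫ x : ℝ, cexp (a * x) * ((iteratedDeriv n f x : ℝ) : ℂ) =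
      (-a) ^ n * ∫ x : ℝ, cexp (a * x) * (f x : ℂ) := by
  induction n with
  | zero => simp
  | succ n ih =>
    have hu (x : ℝ) : HasDerivAt (fun x : ℝ => cexp (a * x)) (cexp (a * x) * a) x := by
      simpa using ((hasDerivAt_id x).ofReal_comp.const_mul a).cexp
    have hv (x : ℝ) : HasDerivAt (fun x => ((iteratedDeriv n f x : ℝ) : ℂ))
        ((iteratedDeriv (n + 1) f x : ℝ) : ℂ) x := by
      rw [iteratedDeriv_succ]
      exact (hf.differentiable_iteratedDeriv n (mod_cast WithTop.coe_lt_top _)).differentiableAt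
        |>.hasDerivAt.ofReal_comp
    have hu'v : Integrable fun x : ℝ => cexp (a * x) * a * ((iteratedDeriv n f x : ℝ) : ℂ) :=
      ((hint n).const_mul a).congr (ae_of_all _ fun x => by ring)
    rw [integral_mul_deriv_eq_deriv_mul_of_integrable (fun x _ => hu x) (fun x _ => hv x)
      (hint (n + 1)) hu'v (hint n)]
    simp_rw [mul_right_comm _ a, integral_mul_const, ih]
    ring

lemma integral_cexp_mul_exp_neg_sq (a : ℂ) :
    ∫ x : ℝ, cexp (a * x) * ((Real.exp (-x ^ 2) : ℝ) : ℂ) = √π * cexp (a ^ 2 / 4) := by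
  have h (x : ℝ) :
      cexp (a * x) * ((Real.exp (-x ^ 2) : ℝ) : ℂ) = cexp (-1 * x ^ 2 + a * x + 0) := by
    push_cast
    rw [← Complex.exp_add]
    ring_nf
  simp_rw [h]
  rw [integral_cexp_quadratic (by norm_num), Real.sqrt_eq_rpow, ofReal_cpow pi_pos.le]
  norm_num
  ring_nf

lemma integrable_cexp_mul_iteratedDeriv_exp_neg_sq (a : ℂ) (k : ℕ) :
    Integrable fun x : ℝ =>
      cexp (a * x) * ((iteratedDeriv k (fun y => Real.exp (-y ^ 2)) x : ℝ) : ℂ) := by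
  obtain ⟨p, hp⟩ := exists_iteratedDeriv_exp_eval_eq (-X ^ 2) k
  simp only [eval_neg, eval_pow, eval_X] at hp
  refine (integrable_eval_mul_cexp_quadratic p (b := -1) (by norm_num) a 0).congr
    (ae_of_all _ fun x => ?_)
  simp only [hp]
  push_cast
  rw [mul_left_comm, ← Complex.exp_add]
  ring_nf

lemma integral_cexp_mul_iteratedDeriv_exp_neg_sq (a : ℂ) (n : ℕ) :
    ∫ x : ℝ, cexp (a * x) * ((iteratedDeriv n (fun y => Real.exp (-y ^ 2)) x : ℝ) : ℂ) =
      (-a) ^ n * √π * cexp (a ^ 2 / 4) := by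
  rw [integral_cexp_mul_iteratedDeriv (by fun_prop) a
    (integrable_cexp_mul_iteratedDeriv_exp_neg_sq a) n, integral_cexp_mul_exp_neg_sq, mul_assoc]

lemma segalBargmann_hermite_constant (n : ℕ) :
    π ^ (-(1 / 4 : ℝ)) * (√π * 2 ^ n * n.factorial) ^ (-(1 / 2 : ℝ)) * √2 ^ n * √π =
      (√n.factorial)⁻¹ := by
  have hπ : π ^ (1 / 4 : ℝ) = √√π := by
    rw [Real.sqrt_eq_rpow, Real.sqrt_eq_rpow, ← Real.rpow_mul pi_pos.le]
    norm_num
  have h2 : √(2 ^ n) = √2 ^ n := by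
    rw [← Real.sqrt_sq (by positivity : (0 : ℝ) ≤ √2 ^ n), ← pow_mul, mul_comm, pow_mul,
      Real.sq_sqrt zero_le_two]
  have hπ2 : √π = √√π ^ 2 := (Real.sq_sqrt (Real.sqrt_nonneg π)).symm
  rw [Real.rpow_neg pi_pos.le, Real.rpow_neg (by positivity), ← Real.sqrt_eq_rpow, hπ,
    Real.sqrt_mul (by positivity), Real.sqrt_mul (by positivity), h2]
  field_simp
  exact hπ2

/-- The Segal–Bargmann transform maps the `n`-th Hermite function
`ψ_n(x) = (√π·2^n·n!)^{-1/2} e^{-x²/2} H_n(x)`, where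
`H_n(x) = (-1)^n e^{x²} (d/dx)^n (e^{-x²})` is the physicists' Hermite polynomial, to
the normalized monomial `z^n/√(n!)`:
`π^{-1/4} ∫_ℝ exp(-z²/2 - x²/2 + √2·x·z) ψ_n(x) dx = z^n/√(n!)` for all `z ∈ ℂ`. -/
theorem segal_bargmann_transform_hermite (n : ℕ) :
    ∀ z : ℂ,
      ((π ^ (-(1 / 4 : ℝ)) : ℝ) : ℂ) *
        (∫ x : ℝ, Complex.exp (-z ^ 2 / 2 - (x : ℂ) ^ 2 / 2 +
            (Real.sqrt 2 : ℂ) * (x : ℂ) * z) *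
          ((((Real.sqrt π * 2 ^ n * n.factorial) ^ (-(1 / 2 : ℝ)) *
              Real.exp (-x ^ 2 / 2) *
              ((-1 : ℝ) ^ n * Real.exp (x ^ 2) *
                iteratedDeriv n (fun y : ℝ => Real.exp (-y ^ 2)) x)) : ℝ) : ℂ)) =
      z ^ n / ((Real.sqrt n.factorial : ℝ) : ℂ) := by
  intro z
  set C : ℝ := (√π * 2 ^ n * n.factorial) ^ (-(1 / 2 : ℝ))
  set D : ℝ → ℝ := iteratedDeriv n (fun y => Real.exp (-y ^ 2))
  have hintegrand (x : ℝ) : cexp (-z ^ 2 / 2 - (x : ℂ) ^ 2 / 2 + √2 * x * z) *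
      ((C * Real.exp (-x ^ 2 / 2) * ((-1 : ℝ) ^ n * Real.exp (x ^ 2) * D x) : ℝ) : ℂ) =
      (C * (-1) ^ n * cexp (-z ^ 2 / 2)) * (cexp ((√2 * z) * x) * (D x : ℂ)) := by
    have hexp : cexp (-z ^ 2 / 2 - (x : ℂ) ^ 2 / 2 + √2 * x * z) * cexp (-(x : ℂ) ^ 2 / 2) *
        cexp ((x : ℂ) ^ 2) = cexp (-z ^ 2 / 2) * cexp ((√2 * z) * x) := by
      simp only [← Complex.exp_add]
      ring_nf
    push_cast
    linear_combination (C * (-1) ^ n * (D x : ℂ)) * hexp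
  have hsq : (√2 * z) ^ 2 / 4 = z ^ 2 / 2 := by
    rw [mul_pow, ← ofReal_pow, Real.sq_sqrt zero_le_two]
    push_cast
    ring
  simp_rw [hintegrand]
  rw [integral_const_mul, integral_cexp_mul_iteratedDeriv_exp_neg_sq, hsq]
  calc _ = (π ^ (-(1 / 4 : ℝ)) * C * √2 ^ n * √π : ℝ) * z ^ n * ((-1) ^ n * (-1) ^ n) *
        (cexp (-z ^ 2 / 2) * cexp (z ^ 2 / 2)) := by push_cast; ring
    _ = z ^ n / √(n.factorial : ℝ) := by
      rw [← mul_pow, ← Complex.exp_add, segalBargmann_hermite_constant, neg_div, neg_add_cancel,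
        Complex.exp_zero]
      push_cast
      ring
end

section
/- For each natural number n, the Hermite function ψ_n(x) = (√π · 2^n · n!)^{-1/2} e^{-x²/2} H_n(x), with H_n(x) = (-1)^n e^{x²} (d/dx)^n(e^{-x²}), satisfies the time-independent Schrödinger equation of the harmonic oscillator: -(1/2)·ψ_n''(x) + (1/2)·x²·ψ_n(x) = (n + 1/2)·ψ_n(x) for all x ∈ ℝ. -/
/-!
Let `g = (e^{-t²})⁽ⁿ⁾`. Differentiating `(e^{-t²})' + 2t e^{-t²} = 0` a further `n + 1` times
gives `g'' + 2t g' + 2(n + 1) g = 0`. Since `H_n = (-1)ⁿ e^{t²} g`, `ψ_n` is a constant multiple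
of `e^{t²/2} g`, and the substitution `φ = e^{t²/2} u` turns this equation for `u` into
`-φ''/2 + t²φ/2 = (n + 1/2) φ`.
-/

open Real
open scoped ContDiff

section

variable {𝕜 : Type*} [NontriviallyNormedField 𝕜]

lemma hasDerivAt_iteratedDeriv_of_contDiff {F : Type*} [NormedAddCommGroup F] [NormedSpace 𝕜 F]
    {f : 𝕜 → F} (hf : ContDiff 𝕜 ∞ f) (n : ℕ) (t : 𝕜) :
    HasDerivAt (iteratedDeriv n f) (iteratedDeriv (n + 1) f t) t := by
  rw [iteratedDeriv_succ]
  exact (hf.differentiable_iteratedDeriv n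
    (WithTop.coe_lt_coe.2 (ENat.natCast_lt_top n)) t).hasDerivAt

lemma eq_zero_of_hasDerivAt_of_forall_eq_zero {F : Type*} [NormedAddCommGroup F]
    [NormedSpace 𝕜 F] {f : 𝕜 → F} {f' : F} {t : 𝕜} (hf : ∀ s, f s = 0)
    (h : HasDerivAt f f' t) : f' = 0 :=
  h.unique (by simpa [funext hf] using hasDerivAt_const t (0 : F))

lemma iteratedDeriv_recurrence_of_deriv_eq {f : 𝕜 → 𝕜} {a : 𝕜} (hf : ContDiff 𝕜 ∞ f)
    (hf' : ∀ t, deriv f t = -a * t * f t) (n : ℕ) (t : 𝕜) :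
    iteratedDeriv (n + 2) f t + a * t * iteratedDeriv (n + 1) f t
      + a * (n + 1) * iteratedDeriv n f t = 0 := by
  have hd := hasDerivAt_iteratedDeriv_of_contDiff hf
  induction n generalizing t with
  | zero =>
    have h := (hd 1 t).add (((hasDerivAt_id' t).const_mul a).mul (hd 0 t))
    have := eq_zero_of_hasDerivAt_of_forall_eq_zero (fun s => by simp [hf' s]) h
    simp only [iteratedDeriv_zero] at this ⊢
    push_cast
    linear_combination this
  | succ n ih =>
    have h := ((hd (n + 2) t).add (((hasDerivAt_id' t).const_mul a).mul (hd (n + 1) t))).add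
      ((hd n t).const_mul (a * (n + 1)))
    have := eq_zero_of_hasDerivAt_of_forall_eq_zero ih h
    push_cast
    linear_combination this

end

lemma harmonicOscillator_exp_mul_of_ode {u u' u'' : ℝ → ℝ} {E : ℝ}
    (hu : ∀ t, HasDerivAt u (u' t) t) (hu' : ∀ t, HasDerivAt u' (u'' t) t)
    (hode : ∀ t, u'' t + 2 * t * u' t + 2 * (E + 1) * u t = 0) (t : ℝ) :
    -(1 / 2) * deriv (deriv fun s => exp (s ^ 2 / 2) * u s) t
        + (1 / 2) * t ^ 2 * (exp (t ^ 2 / 2) * u t)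
      = (E + 1 / 2) * (exp (t ^ 2 / 2) * u t) := by
  have hexp (s : ℝ) : HasDerivAt (fun s => exp (s ^ 2 / 2)) (exp (s ^ 2 / 2) * s) s := by
    simpa using ((hasDerivAt_pow 2 s).div_const 2).exp
  have hφ' : deriv (fun s => exp (s ^ 2 / 2) * u s) =
      fun s => exp (s ^ 2 / 2) * (s * u s + u' s) := by
    funext s
    exact ((hexp s).mul (hu s)).deriv.trans (by ring)
  have hφ'' : deriv (deriv fun s => exp (s ^ 2 / 2) * u s) t =
      exp (t ^ 2 / 2) * ((1 + t ^ 2) * u t + 2 * t * u' t + u'' t) := by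
    rw [hφ']
    exact ((hexp t).mul (((hasDerivAt_id' t).mul (hu t)).add (hu' t))).deriv.trans
      (by simp only [Pi.add_apply, Pi.mul_apply]; ring)
  rw [hφ'']
  linear_combination (-(1 / 2) * exp (t ^ 2 / 2)) * hode t

/-- The `n`-th Hermite function
`ψ_n(x) = (√π·2^n·n!)^{-1/2} e^{-x²/2} H_n(x)`, where
`H_n(x) = (-1)^n e^{x²} (d/dx)^n (e^{-x²})`, satisfies the time-independent Schrödinger
equation of the harmonic oscillator:
`-(1/2)·ψ_n''(x) + (1/2)·x²·ψ_n(x) = (n + 1/2)·ψ_n(x)` for all `x ∈ ℝ`. -/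
theorem hermite_function_schrodinger (n : ℕ) (H ψ : ℝ → ℝ)
    (hH : ∀ y : ℝ, H y =
      (-1 : ℝ) ^ n * Real.exp (y ^ 2) *
        iteratedDeriv n (fun t : ℝ => Real.exp (-t ^ 2)) y)
    (hψ : ∀ y : ℝ, ψ y =
      (Real.sqrt π * 2 ^ n * n.factorial) ^ (-(1 / 2 : ℝ)) *
        Real.exp (-y ^ 2 / 2) * H y) :
    ∀ x : ℝ,
      -(1 / 2) * deriv (deriv ψ) x + (1 / 2) * x ^ 2 * ψ x =
        ((n : ℝ) + 1 / 2) * ψ x := by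
  set G : ℝ → ℝ := fun t => exp (-t ^ 2)
  set K : ℝ := (Real.sqrt π * 2 ^ n * n.factorial) ^ (-(1 / 2 : ℝ)) * (-1) ^ n
  have hG : ContDiff ℝ ∞ G := by fun_prop
  have hG' (t : ℝ) : deriv G t = -2 * t * G t := by
    refine ((hasDerivAt_pow 2 t).neg.exp).deriv.trans ?_
    simp only [Pi.neg_apply, G]
    ring
  have hψG : ψ = fun y => exp (y ^ 2 / 2) * (K * iteratedDeriv n G y) := by
    funext y
    have hexp : exp (-y ^ 2 / 2) * exp (y ^ 2) = exp (y ^ 2 / 2) := by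
      rw [← exp_add]; ring_nf
    rw [hψ, hH, ← hexp]
    ring
  rw [hψG]
  exact harmonicOscillator_exp_mul_of_ode (u := fun y => K * iteratedDeriv n G y) (E := n)
    (fun t => (hasDerivAt_iteratedDeriv_of_contDiff hG n t).const_mul K)
    (fun t => (hasDerivAt_iteratedDeriv_of_contDiff hG (n + 1) t).const_mul K)
    (fun t => by linear_combination K * iteratedDeriv_recurrence_of_deriv_eq hG hG' n t)
end

section
/- Fix α ∈ ℂ and natural numbers m, n. Then ∫_ℂ conj(z)^m · z^n · e^{α z} · e^{-|z|²} dA(z) equals π · m! · α^{m-n}/(m-n)! when m ≥ n, and equals 0 when m < n. Consequently, the matrix elements of the Toeplitz operator whose symbol is the coherent state ψ_α(z) = e^{-|α|²/2} e^{α z} are (T_{ψ_α})_{mn} = e^{-|α|²/2}·(m!·n!)^{-1/2}·α^{m-n}·m!/(m-n)! for m ≥ n (with the 1/π-normalized inner product) and vanish for m < n, i.e. the matrix is lower triangular. -/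
/-! Expanding `exp (α z) = ∑ αʲ zʲ / j!` reduces the integral to the Gaussian orthogonality of
monomials, `∫ conj z ^ m * z ^ k * exp (-‖z‖²) = π m! δₖₘ`, so only the term `j = m - n`
survives. In polar coordinates that orthogonality splits into `∫ exp (i (k - m) θ) dθ = 2π δₖₘ`
and the Gamma integral `∫₀^∞ r^(2m+1) exp (-r²) dr = m!/2`. Termwise integration is dominated
convergence, with the integrable majorant `‖z‖^(m+n) exp (‖α‖ ‖z‖ - ‖z‖²)`. -/

open MeasureTheory Real Set
open scoped Nat

lemma integral_exp_int_mul_mul_I (k : ℤ) :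
    ∫ θ in Ioo (-π) π, Complex.exp (k * θ * Complex.I) = if k = 0 then (2 * π : ℂ) else 0 := by
  rw [← integral_Ioc_eq_integral_Ioo, ← intervalIntegral.integral_of_le (by linarith [pi_pos])]
  split_ifs with hk
  · subst hk
    simp only [Int.cast_zero, zero_mul, Complex.exp_zero, intervalIntegral.integral_const,
      Complex.real_smul, mul_one]
    push_cast
    ring
  · have hkI : (k : ℂ) * Complex.I ≠ 0 := by simp [hk]
    simp_rw [mul_right_comm (k : ℂ) _ Complex.I]
    rw [integral_exp_mul_complex hkI, sub_eq_zero_of_eq, zero_div]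
    have : (k : ℂ) * Complex.I * π = k * Complex.I * (-π : ℝ) + k * (2 * π * Complex.I) := by
      push_cast; ring
    rw [this, Complex.exp_add, Complex.exp_int_mul_two_pi_mul_I, mul_one]

lemma integral_pow_two_mul_add_one_mul_exp_neg_sq (m : ℕ) :
    ∫ r in Ioi (0 : ℝ), r ^ (2 * m + 1) * Real.exp (-r ^ 2) = m ! / 2 := by
  have hGamma := integral_rpow_mul_exp_neg_rpow two_pos
    (by linarith [(2 * m + 1 : ℕ).cast_nonneg (α := ℝ)] : -1 < ((2 * m + 1 : ℕ) : ℝ))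
  rw [show (((2 * m + 1 : ℕ) : ℝ) + 1) / 2 = m + 1 by push_cast; ring,
    Real.Gamma_nat_eq_factorial] at hGamma
  simp only [Real.rpow_natCast, Real.rpow_two] at hGamma
  rw [hGamma]
  ring

lemma integrableOn_pow_mul_exp_mul_mul_exp_neg_sq (q : ℕ) (a : ℝ) :
    IntegrableOn (fun r : ℝ => r ^ q * Real.exp (a * r) * Real.exp (-r ^ 2)) (Ioi 0) := by
  have hgauss : IntegrableOn (fun r : ℝ => r ^ (q : ℝ) * Real.exp (-(1 / 2) * r ^ 2)) (Ioi 0) :=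
    integrableOn_rpow_mul_exp_neg_mul_sq (by norm_num) (by linarith [q.cast_nonneg (α := ℝ)])
  refine (hgauss.const_mul (Real.exp (a ^ 2 / 2))).mono' (by fun_prop) ?_
  filter_upwards [ae_restrict_mem measurableSet_Ioi] with r (hr : 0 < r)
  rw [Real.norm_of_nonneg (by positivity), Real.rpow_natCast, mul_assoc, ← Real.exp_add,
    mul_left_comm, ← Real.exp_add]
  gcongr r ^ q * Real.exp ?_
  nlinarith [sq_nonneg (r - a)]

lemma integrable_norm_pow_mul_exp_mul_norm_mul_exp_neg_norm_sq {E : Type*}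
    [NormedAddCommGroup E] [NormedSpace ℝ E] [FiniteDimensional ℝ E] [Nontrivial E]
    [MeasurableSpace E] [BorelSpace E] (μ : Measure E) [μ.IsAddHaarMeasure] (p : ℕ) (a : ℝ) :
    Integrable (fun x : E => ‖x‖ ^ p * Real.exp (a * ‖x‖) * Real.exp (-‖x‖ ^ 2)) μ := by
  rw [integrable_fun_norm_addHaar μ (f := fun r => r ^ p * Real.exp (a * r) * Real.exp (-r ^ 2))]
  refine (integrableOn_pow_mul_exp_mul_mul_exp_neg_sq (Module.finrank ℝ E - 1 + p) a).congr_fun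
    (fun r _ => ?_) measurableSet_Ioi
  simp only [smul_eq_mul]
  ring

lemma conj_pow_mul_pow_polarCoord_symm (r θ : ℝ) (m k : ℕ) :
    (starRingEnd ℂ (Complex.polarCoord.symm (r, θ))) ^ m * Complex.polarCoord.symm (r, θ) ^ k =
      r ^ (m + k) * Complex.exp (((k : ℤ) - (m : ℤ)) * θ * Complex.I) := by
  have hpolar : Complex.polarCoord.symm (r, θ) = r * Complex.exp (θ * Complex.I) := by
    rw [Complex.polarCoord_symm_apply, Complex.exp_mul_I]
    push_cast
    ring
  rw [hpolar, map_mul, Complex.conj_ofReal,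
    ← Complex.exp_conj, mul_pow, mul_pow, pow_add, ← Complex.exp_nat_mul, ← Complex.exp_nat_mul]
  simp only [map_mul, Complex.conj_ofReal, Complex.conj_I]
  rw [mul_mul_mul_comm, ← Complex.exp_add]
  congr 2
  push_cast
  ring

theorem integral_conj_pow_mul_pow_mul_exp_neg_norm_sq (m k : ℕ) :
    ∫ z : ℂ, (starRingEnd ℂ z) ^ m * z ^ k * (Real.exp (-‖z‖ ^ 2) : ℂ) =
      if k = m then (π * m ! : ℂ) else 0 := by
  have hpolar (p : ℝ × ℝ) : p.1 • ((starRingEnd ℂ (Complex.polarCoord.symm p)) ^ m *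
      Complex.polarCoord.symm p ^ k * (Real.exp (-‖Complex.polarCoord.symm p‖ ^ 2) : ℂ)) =
      ((p.1 ^ (m + k + 1) * Real.exp (-p.1 ^ 2) : ℝ) : ℂ) *
        Complex.exp (((k : ℤ) - (m : ℤ)) * p.2 * Complex.I) := by
    rw [conj_pow_mul_pow_polarCoord_symm, Complex.norm_polarCoord_symm, sq_abs, Complex.real_smul]
    push_cast
    ring
  rw [← Complex.integral_comp_polarCoord_symm, polarCoord_target, Measure.volume_eq_prod,
    ← Measure.prod_restrict]
  simp_rw [hpolar]
  rw [integral_prod_mul (fun r : ℝ => ((r ^ (m + k + 1) * Real.exp (-r ^ 2) : ℝ) : ℂ))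
    (fun θ : ℝ => Complex.exp (((k : ℤ) - (m : ℤ)) * θ * Complex.I)), integral_complex_ofReal,
    ← Int.cast_sub, integral_exp_int_mul_mul_I]
  simp only [sub_eq_zero, Nat.cast_inj]
  split_ifs with hkm
  · subst hkm
    rw [← two_mul, integral_pow_two_mul_add_one_mul_exp_neg_sq]
    push_cast
    ring
  · rw [mul_zero]

theorem integral_conj_pow_mul_pow_mul_exp_mul_mul_exp_neg_norm_sq (α : ℂ) (m n : ℕ) :
    ∫ z : ℂ, (starRingEnd ℂ z) ^ m * z ^ n * Complex.exp (α * z) * (Real.exp (-‖z‖ ^ 2) : ℂ) =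
      if n ≤ m then (π : ℂ) * m ! * α ^ (m - n) / (m - n)! else 0 := by
  set F : ℕ → ℂ → ℂ := fun j z =>
    α ^ j / j ! * ((starRingEnd ℂ z) ^ m * z ^ (n + j) * (Real.exp (-‖z‖ ^ 2) : ℂ))
  set bound : ℕ → ℂ → ℝ := fun j z =>
    ‖z‖ ^ (m + n) * ((‖α‖ * ‖z‖) ^ j / j !) * Real.exp (-‖z‖ ^ 2)
  have hF (z : ℂ) : HasSum (fun j => F j z)
      ((starRingEnd ℂ z) ^ m * z ^ n * Complex.exp (α * z) * (Real.exp (-‖z‖ ^ 2) : ℂ)) := by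
    have hexp := NormedSpace.expSeries_div_hasSum_exp (α * z)
    rw [← Complex.exp_eq_exp_ℂ] at hexp
    refine ((hexp.mul_left ((starRingEnd ℂ z) ^ m * z ^ n)).mul_right
      (Real.exp (-‖z‖ ^ 2) : ℂ)).congr_fun fun j => ?_
    simp only [F]
    ring
  have hbound (z : ℂ) : HasSum (fun j => bound j z)
      (‖z‖ ^ (m + n) * Real.exp (‖α‖ * ‖z‖) * Real.exp (-‖z‖ ^ 2)) := by
    have hexp := NormedSpace.expSeries_div_hasSum_exp (‖α‖ * ‖z‖)
    rw [← Real.exp_eq_exp_ℝ] at hexp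
    exact (hexp.mul_left _).mul_right _
  have hnorm (j : ℕ) (z : ℂ) : ‖F j z‖ = bound j z := by
    simp only [F, bound, norm_mul, norm_div, norm_pow, RCLike.norm_conj, Complex.norm_natCast,
      Complex.norm_real, Real.norm_eq_abs, Real.abs_exp]
    ring
  have hterm (j : ℕ) : ∫ z, F j z = α ^ j / j ! * if n + j = m then (π * m ! : ℂ) else 0 := by
    rw [integral_const_mul, integral_conj_pow_mul_pow_mul_exp_neg_norm_sq]
  have hsum := hasSum_integral_of_dominated_convergence bound
    (fun j => (by fun_prop : Continuous (F j)).aestronglyMeasurable)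
    (fun j => .of_forall fun z => (hnorm j z).le) (.of_forall fun z => (hbound z).summable)
    (by
      simp_rw [(hbound _).tsum_eq]
      exact integrable_norm_pow_mul_exp_mul_norm_mul_exp_neg_norm_sq volume (m + n) ‖α‖)
    (.of_forall hF)
  simp_rw [hterm] at hsum
  refine hsum.unique ?_
  split_ifs with hnm
  · convert hasSum_single (m - n) fun j hj => ?_
    · rw [if_pos (by omega)]
      ring
    · rw [if_neg (by omega), mul_zero]
  · convert hasSum_zero with j
    rw [if_neg (by omega), mul_zero]

/-- Fix `α ∈ ℂ` and naturals `m`, `n`. Then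
`∫_ℂ conj(z)^m z^n e^{α z} e^{-|z|²} dA(z)` equals `π · m! · α^{m-n}/(m-n)!` when
`m ≥ n` and `0` when `m < n`. Consequently, the matrix elements of the Toeplitz operator
whose symbol is the coherent state `ψ_α(z) = e^{-|α|²/2} e^{α z}` are
`(T_{ψ_α})_{mn} = e^{-|α|²/2} (m! n!)^{-1/2} α^{m-n} m!/(m-n)!` for `m ≥ n` and vanish
for `m < n`, i.e. the matrix is lower triangular. -/
theorem toeplitz_coherent_state_matrix (α : ℂ) (m n : ℕ) :
    ((∫ z : ℂ, (starRingEnd ℂ z) ^ m * z ^ n * Complex.exp (α * z) *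
        (Real.exp (-‖z‖ ^ 2) : ℂ)) =
      if n ≤ m then
        (π : ℂ) * (m.factorial : ℂ) * α ^ (m - n) / ((m - n).factorial : ℂ)
      else 0) ∧
    (((1 / (π : ℂ)) * ((1 / Real.sqrt (m.factorial * n.factorial) : ℝ) : ℂ) *
        ∫ z : ℂ, (starRingEnd ℂ z) ^ m *
          (Complex.exp (-((‖α‖ : ℂ)) ^ 2 / 2) * Complex.exp (α * z)) *
          z ^ n * (Real.exp (-‖z‖ ^ 2) : ℂ)) =
      if n ≤ m then
        Complex.exp (-((‖α‖ : ℂ)) ^ 2 / 2) *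
          ((1 / Real.sqrt (m.factorial * n.factorial) : ℝ) : ℂ) *
          α ^ (m - n) * (m.factorial : ℂ) / ((m - n).factorial : ℂ)
      else 0) := by
  have hmoment := integral_conj_pow_mul_pow_mul_exp_mul_mul_exp_neg_norm_sq α m n
  refine ⟨hmoment, ?_⟩
  have hpull : ∫ z : ℂ, (starRingEnd ℂ z) ^ m *
      (Complex.exp (-((‖α‖ : ℂ)) ^ 2 / 2) * Complex.exp (α * z)) * z ^ n *
        (Real.exp (-‖z‖ ^ 2) : ℂ) = Complex.exp (-((‖α‖ : ℂ)) ^ 2 / 2) *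
      ∫ z : ℂ, (starRingEnd ℂ z) ^ m * z ^ n * Complex.exp (α * z) *
        (Real.exp (-‖z‖ ^ 2) : ℂ) := by
    rw [← integral_const_mul]
    congr 1 with z
    ring
  have hπ : (π : ℂ) ≠ 0 := mod_cast pi_ne_zero
  rw [hpull, hmoment]
  split_ifs
  · field_simp
  · rw [mul_zero, mul_zero]
end
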